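/- Fix an integer k ≥ 1. In the ring of formal power series ℝ⟦X⟧, the probability generating function G(X) = ∑_{v≥0} P(V(k) = v)·X^v satisfies both (1 − q·∑_{i=1}^{k} p^{i−1}·X^i)·G(X) = p^k·X^k and (1 − X + p^k·q·X^{k+1})·G(X) = p^k·X^k − p^{k+1}·X^{k+1}. -/

import Mathlib

/-!
Let `g m` be the probability that no run of `k` successes is completed by trial `m`. The first run
is completed at trial `m + k + 1` exactly when no run is completed by trial `m`, trial `m + 1` is a
failure and the next `k` trials are successes; by independence of disjoint blocks of trials,
`P(V = m + k + 1) = p^k q g m`, while `g m - g (m + 1) = P(V = m + 1)`. Together with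
`P(V = k) = p^k` and `P(V < k) = 0` (a run is completed almost surely, since the probability of no
run in the first `j` blocks of length `k` is at most `(1 - p^k)^j`), these recurrences are the
coefficient identities of the second equation. The first one follows by cancelling `1 - pX`, since
`1 - X + p^k q X^(k+1) = (1 - pX) (1 - q ∑_{i=1}^k p^(i-1) X^i)`.
-/

open MeasureTheory Finset PowerSeries

/-- Waiting time for the first success run of length `k`: the smallest `n ≥ k` such that
trials `n - k + 1, …, n` are all successes (trials are indexed from `1`). -/
noncomputable def waitingTime (k : ℕ) (ω : ℕ → Bool) : ℕ :=
  sInf {n | k ≤ n ∧ ∀ i ∈ Finset.Icc (n - k + 1) n, ω i = true}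

namespace SuccessRun

variable {p : ℝ} {μ : Measure (ℕ → Bool)} {k : ℕ}

def cylinder (n : ℕ) (b : ℕ → Bool) : Set (ℕ → Bool) := {ω | ∀ i, 1 ≤ i → i ≤ n → ω i = b i}

def block (m n : ℕ) (c : Bool) : Set (ℕ → Bool) := {ω | ∀ i ∈ Ioc m n, ω i = c}

def trialWeight (p : ℝ) (b : Bool) : ℝ := if b then p else 1 - p

def IsBernoulli (p : ℝ) (μ : Measure (ℕ → Bool)) : Prop :=
  ∀ n b, μ (cylinder n b) = ENNReal.ofReal (∏ i ∈ Icc 1 n, trialWeight p (b i))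

@[simp] theorem trialWeight_true (p : ℝ) : trialWeight p true = p := rfl

@[simp] theorem trialWeight_false (p : ℝ) : trialWeight p false = 1 - p := rfl

theorem trialWeight_nonneg (hp0 : 0 ≤ p) (hp1 : p ≤ 1) (b : Bool) : 0 ≤ trialWeight p b := by
  cases b <;> simpa

theorem measurableSet_cylinder (n : ℕ) (b : ℕ → Bool) : MeasurableSet (cylinder n b) := by
  simp only [cylinder, Set.ofPred_forall]
  exact .iInter fun i => .iInter fun _ => .iInter fun _ =>
    measurableSet_eq_fun (measurable_pi_apply i) measurable_const

theorem exists_finset_cylinder_decomposition {n : ℕ} {A : Set (ℕ → Bool)}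
    (hA : DependsOn (· ∈ A) (Set.Icc 1 n)) :
    ∃ F : Finset (ℕ → Bool), (F : Set (ℕ → Bool)).PairwiseDisjoint (cylinder n) ∧
      A = ⋃ b ∈ F, cylinder n b := by
  set S := {b ∈ A | ∀ i ∉ Set.Icc 1 n, b i = true}
  have hS : S.Finite := by
    refine Set.Finite.of_finite_image (f := (Set.Icc 1 n).domRestrict) (Set.toFinite _)
      fun b hb b' hb' h => funext fun i => ?_
    by_cases hi : i ∈ Set.Icc 1 n
    · exact congrFun h ⟨i, hi⟩
    · rw [hb.2 i hi, hb'.2 i hi]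
  refine ⟨hS.toFinset, fun b hb b' hb' hne => Set.disjoint_left.2 fun ω hω hω' => hne ?_, ?_⟩
  · simp only [Set.Finite.coe_toFinset] at hb hb'
    funext i
    by_cases hi : i ∈ Set.Icc 1 n
    · rw [← hω i hi.1 hi.2, hω' i hi.1 hi.2]
    · rw [hb.2 i hi, hb'.2 i hi]
  · ext ω
    simp only [Set.mem_iUnion, Set.Finite.mem_toFinset, exists_prop]
    constructor
    · intro hω
      classical
      refine ⟨fun i => if i ∈ Set.Icc 1 n then ω i else true, ⟨?_, fun i hi => if_neg hi⟩,
        fun i h1 h2 => (if_pos ⟨h1, h2⟩).symm⟩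
      exact (hA fun i hi => (if_pos hi).symm).mp hω
    · rintro ⟨b, hb, hω⟩
      exact (hA fun i hi => (hω i hi.1 hi.2).symm).mp hb.1

theorem measurableSet_of_dependsOn {n : ℕ} {A : Set (ℕ → Bool)}
    (hA : DependsOn (· ∈ A) (Set.Icc 1 n)) : MeasurableSet A := by
  obtain ⟨F, -, rfl⟩ := exists_finset_cylinder_decomposition hA
  exact .biUnion F.countable_toSet fun b _ => measurableSet_cylinder n b

theorem dependsOn_block (m n : ℕ) (c : Bool) :
    DependsOn (· ∈ block m n c) (Set.Icc 1 n) := fun ω ω' h => by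
  simp only [block, Set.mem_ofPred_eq, eq_iff_iff]
  refine forall₂_congr fun i hi => ?_
  rw [mem_Ioc] at hi
  rw [h i ⟨by omega, hi.2⟩]

theorem dependsOn_inter {s : Set ℕ} {A B : Set (ℕ → Bool)} (hA : DependsOn (· ∈ A) s)
    (hB : DependsOn (· ∈ B) s) : DependsOn (· ∈ A ∩ B) s := fun ω ω' h => by
  simp only [Set.mem_inter_iff, hA h, hB h]

theorem cylinder_inter_block {m n : ℕ} (hmn : m ≤ n) (b : ℕ → Bool) (c : Bool) :
    cylinder m b ∩ block m n c = cylinder n (fun i => if i ≤ m then b i else c) := by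
  ext ω
  simp only [cylinder, block, Set.mem_inter_iff, Set.mem_ofPred_eq, mem_Ioc]
  constructor
  · rintro ⟨hb, hc⟩ i h1 h2
    split_ifs with hi
    exacts [hb i h1 hi, hc i ⟨by omega, h2⟩]
  · intro h
    refine ⟨fun i h1 h2 => by rw [h i h1 (by omega), if_pos h2], fun i hi => ?_⟩
    rw [h i (by omega) hi.2, if_neg (by omega)]

theorem prod_trialWeight_ite {m n : ℕ} (hmn : m ≤ n) (p : ℝ) (b : ℕ → Bool) (c : Bool) :
    ∏ i ∈ Icc 1 n, trialWeight p (if i ≤ m then b i else c)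
      = (∏ i ∈ Icc 1 m, trialWeight p (b i)) * trialWeight p c ^ (n - m) := by
  have hIoc (n : ℕ) : Icc 1 n = Ioc 0 n := Icc_add_one_left_eq_Ioc 0 n
  rw [hIoc, hIoc, ← prod_Ioc_consecutive _ (Nat.zero_le m) hmn]
  congr 1
  · exact prod_congr rfl fun i hi => by rw [if_pos (mem_Ioc.1 hi).2]
  · rw [prod_congr rfl fun i hi => by rw [if_neg (by simp at hi; omega)], prod_const,
      Nat.card_Ioc]

theorem measure_inter_block (hp0 : 0 ≤ p) (hp1 : p ≤ 1) (hμ : IsBernoulli p μ) {m n : ℕ}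
    (hmn : m ≤ n) {A : Set (ℕ → Bool)} (hA : DependsOn (· ∈ A) (Set.Icc 1 m)) (c : Bool) :
    μ (A ∩ block m n c) = μ A * ENNReal.ofReal (trialWeight p c ^ (n - m)) := by
  have hcyl (b : ℕ → Bool) :
      μ (cylinder m b ∩ block m n c)
        = μ (cylinder m b) * ENNReal.ofReal (trialWeight p c ^ (n - m)) := by
    rw [cylinder_inter_block hmn, hμ, hμ, prod_trialWeight_ite hmn, ENNReal.ofReal_mul
      (prod_nonneg fun _ _ => trialWeight_nonneg hp0 hp1 _)]
  obtain ⟨F, hF, rfl⟩ := exists_finset_cylinder_decomposition hA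
  have hF' : (F : Set (ℕ → Bool)).PairwiseDisjoint (cylinder m · ∩ block m n c) :=
    hF.mono fun _ => Set.inter_subset_left
  rw [Set.iUnion₂_inter, measure_biUnion_finset hF' fun b _ =>
      (measurableSet_cylinder m b).inter (measurableSet_of_dependsOn (dependsOn_block m n c)),
    measure_biUnion_finset hF fun b _ => measurableSet_cylinder m b, sum_mul]
  exact sum_congr rfl fun b _ => hcyl b

theorem measureReal_inter_block (hp0 : 0 ≤ p) (hp1 : p ≤ 1) (hμ : IsBernoulli p μ) {m n : ℕ}
    (hmn : m ≤ n) {A : Set (ℕ → Bool)} (hA : DependsOn (· ∈ A) (Set.Icc 1 m)) (c : Bool) :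
    μ.real (A ∩ block m n c) = μ.real A * trialWeight p c ^ (n - m) := by
  rw [measureReal_def, measure_inter_block hp0 hp1 hμ hmn hA, ENNReal.toReal_mul,
    ENNReal.toReal_ofReal (pow_nonneg (trialWeight_nonneg hp0 hp1 c) _), measureReal_def]

def IsRunEnd (k : ℕ) (ω : ℕ → Bool) (n : ℕ) : Prop := k ≤ n ∧ ω ∈ block (n - k) n true

def noRunBy (k m : ℕ) : Set (ℕ → Bool) := {ω | ∀ n ≤ m, ¬ IsRunEnd k ω n}

theorem waitingTime_eq_sInf (ω : ℕ → Bool) : waitingTime k ω = sInf {n | IsRunEnd k ω n} := by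
  simp only [waitingTime, IsRunEnd, block, ← Icc_add_one_left_eq_Ioc, Set.mem_ofPred_eq]

theorem waitingTime_eq_iff {v : ℕ} (hv : 0 < v) (ω : ℕ → Bool) :
    waitingTime k ω = v ↔ IsRunEnd k ω v ∧ ∀ n < v, ¬ IsRunEnd k ω n := by
  rw [waitingTime_eq_sInf]
  constructor
  · rintro rfl
    have hne : {n | IsRunEnd k ω n}.Nonempty := by
      by_contra h
      rw [Set.not_nonempty_iff_eq_empty.1 h, Nat.sInf_empty] at hv
      exact hv.false
    exact ⟨Nat.sInf_mem hne, fun n hn => Nat.notMem_of_lt_sInf hn⟩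
  · rintro ⟨hv, hlt⟩
    exact IsLeast.csInf_eq ⟨hv, fun n hn => not_lt.1 fun h => hlt n h hn⟩

theorem mem_noRunBy_of_waitingTime_eq_zero (hk : 1 ≤ k) {ω : ℕ → Bool}
    (h : waitingTime k ω = 0) (m : ℕ) : ω ∈ noRunBy k m := by
  rw [waitingTime_eq_sInf, Nat.sInf_eq_zero] at h
  rcases h with h | h
  · exact absurd h.1 (by omega)
  · exact fun n _ hn => (Set.eq_empty_iff_forall_notMem.1 h n) hn

theorem noRunBy_zero (hk : 1 ≤ k) : noRunBy k 0 = Set.univ :=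
  Set.eq_univ_of_forall fun _ n hn h => by have := h.1; omega

theorem noRunBy_anti : Antitone (noRunBy k) := fun _ _ hmm' _ hω n hn => hω n (hn.trans hmm')

theorem dependsOn_noRunBy (k m : ℕ) : DependsOn (· ∈ noRunBy k m) (Set.Icc 1 m) :=
  fun ω ω' h => by
    simp only [noRunBy, Set.mem_ofPred_eq, eq_iff_iff]
    refine forall₂_congr fun n hn => not_congr (and_congr_right fun _ => ?_)
    exact ((dependsOn_block (n - k) n true).mono (Set.Icc_subset_Icc_right hn) h).to_iff

theorem noRunBy_add_subset (m : ℕ) :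
    noRunBy k (m + k) ⊆ noRunBy k m \ block m (m + k) true := fun ω hω =>
  ⟨fun n hn => hω n (by omega), fun hblock => hω (m + k) le_rfl
    ⟨by omega, by rwa [Nat.add_sub_cancel]⟩⟩

theorem setOf_waitingTime_eq_succ (m : ℕ) :
    {ω | waitingTime k ω = m + 1} = noRunBy k m \ noRunBy k (m + 1) := by
  ext ω
  simp only [Set.mem_ofPred_eq, Set.mem_sdiff, waitingTime_eq_iff m.succ_pos, noRunBy,
    Nat.lt_succ_iff]
  constructor
  · rintro ⟨hrun, hno⟩
    exact ⟨hno, fun h => h (m + 1) le_rfl hrun⟩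
  · rintro ⟨hno, hrun⟩
    simp only [not_forall, not_not] at hrun
    obtain ⟨n, hn, hrn⟩ := hrun
    obtain rfl : n = m + 1 := le_antisymm hn (not_lt.1 fun h => hno n (by omega) hrn)
    exact ⟨hrn, hno⟩

theorem setOf_waitingTime_eq_of_lt {n : ℕ} (hn : 0 < n) (hnk : n < k) :
    {ω | waitingTime k ω = n} = ∅ :=
  Set.eq_empty_of_forall_notMem fun ω h => by
    have := ((waitingTime_eq_iff hn ω).1 h).1.1
    omega

theorem setOf_waitingTime_eq_self (hk : 1 ≤ k) :
    {ω | waitingTime k ω = k} = block 0 k true := by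
  ext ω
  simp only [Set.mem_ofPred_eq, waitingTime_eq_iff hk, IsRunEnd, Nat.sub_self]
  exact ⟨fun h => h.1.2, fun h => ⟨⟨le_rfl, h⟩, fun n hn h => by omega⟩⟩

theorem setOf_waitingTime_eq_add (m : ℕ) :
    {ω | waitingTime k ω = m + k + 1}
      = noRunBy k m ∩ block m (m + 1) false ∩ block (m + 1) (m + k + 1) true := by
  ext ω
  simp only [Set.mem_ofPred_eq, Set.mem_inter_iff, waitingTime_eq_iff (Nat.succ_pos _),
    noRunBy, IsRunEnd, block, mem_Ioc, show m + k + 1 - k = m + 1 by omega]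
  constructor
  · rintro ⟨⟨-, hrun⟩, hno⟩
    refine ⟨⟨fun n hn => hno n (by omega), fun i hi => ?_⟩, hrun⟩
    rw [show i = m + 1 by omega, ← Bool.not_eq_true]
    -- a success at trial `m + 1` would complete a run at trial `m + k`
    refine fun htrue => hno (m + k) (by omega) ⟨by omega, fun j hj => ?_⟩
    rcases eq_or_lt_of_le (show m + 1 ≤ j by omega) with rfl | hj'
    exacts [htrue, hrun j ⟨hj', by omega⟩]
  · rintro ⟨⟨hno, hfalse⟩, hrun⟩
    refine ⟨⟨by omega, hrun⟩, fun n hn hrn => ?_⟩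
    rcases le_or_gt n m with hnm | hmn
    · exact hno n hnm hrn
    · have := hrn.2 (m + 1) ⟨by omega, by omega⟩
      rw [hfalse (m + 1) ⟨by omega, le_rfl⟩] at this
      exact Bool.false_ne_true this

theorem measureReal_noRunBy_add_le [IsFiniteMeasure μ] (hp0 : 0 ≤ p) (hp1 : p ≤ 1)
    (hμ : IsBernoulli p μ) (m : ℕ) :
    μ.real (noRunBy k (m + k)) ≤ (1 - p ^ k) * μ.real (noRunBy k m) := by
  have hsplit := measureReal_sdiff_add_inter (μ := μ) (s := noRunBy k m)
    (measurableSet_of_dependsOn (dependsOn_block m (m + k) true))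
  rw [measureReal_inter_block hp0 hp1 hμ (by omega) (dependsOn_noRunBy k m),
    Nat.add_sub_cancel_left, trialWeight_true] at hsplit
  calc μ.real (noRunBy k (m + k)) ≤ μ.real (noRunBy k m \ block m (m + k) true) :=
        measureReal_mono (noRunBy_add_subset m)
    _ = (1 - p ^ k) * μ.real (noRunBy k m) := by linarith

theorem measureReal_noRunBy_mul_le [IsProbabilityMeasure μ] (hp0 : 0 ≤ p) (hp1 : p ≤ 1)
    (hμ : IsBernoulli p μ) (j : ℕ) : μ.real (noRunBy k (j * k)) ≤ (1 - p ^ k) ^ j := by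
  induction j with
  | zero => exact measureReal_le_one
  | succ j ih =>
    calc μ.real (noRunBy k ((j + 1) * k)) ≤ (1 - p ^ k) * μ.real (noRunBy k (j * k)) := by
          rw [add_one_mul]; exact measureReal_noRunBy_add_le hp0 hp1 hμ _
      _ ≤ (1 - p ^ k) * (1 - p ^ k) ^ j :=
          mul_le_mul_of_nonneg_left ih (sub_nonneg.2 (pow_le_one₀ hp0 hp1))
      _ = (1 - p ^ k) ^ (j + 1) := (pow_succ' _ _).symm

theorem measureReal_waitingTime_eq_zero [IsProbabilityMeasure μ] (hk : 1 ≤ k) (hp0 : 0 < p)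
    (hp1 : p ≤ 1) (hμ : IsBernoulli p μ) : μ.real {ω | waitingTime k ω = 0} = 0 := by
  have hbound (j : ℕ) : μ.real {ω | waitingTime k ω = 0} ≤ (1 - p ^ k) ^ j :=
    (measureReal_mono fun ω h => mem_noRunBy_of_waitingTime_eq_zero hk h (j * k)).trans
      (measureReal_noRunBy_mul_le hp0.le hp1 hμ j)
  have hlim := tendsto_pow_atTop_nhds_zero_of_lt_one (sub_nonneg.2 (pow_le_one₀ hp0.le hp1))
    (sub_lt_self 1 (pow_pos hp0 k))
  exact le_antisymm (ge_of_tendsto' hlim hbound) measureReal_nonneg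

theorem measureReal_waitingTime_eq_of_lt [IsProbabilityMeasure μ] (hk : 1 ≤ k) (hp0 : 0 < p)
    (hp1 : p ≤ 1) (hμ : IsBernoulli p μ) {n : ℕ} (hn : n < k) :
    μ.real {ω | waitingTime k ω = n} = 0 := by
  rcases Nat.eq_zero_or_pos n with rfl | hn0
  · exact measureReal_waitingTime_eq_zero hk hp0 hp1 hμ
  · rw [setOf_waitingTime_eq_of_lt hn0 hn, measureReal_empty]

theorem measureReal_waitingTime_eq_self [IsProbabilityMeasure μ] (hk : 1 ≤ k) (hp0 : 0 ≤ p)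
    (hp1 : p ≤ 1) (hμ : IsBernoulli p μ) : μ.real {ω | waitingTime k ω = k} = p ^ k := by
  rw [setOf_waitingTime_eq_self hk, ← Set.univ_inter (block 0 k true),
    measureReal_inter_block hp0 hp1 hμ k.zero_le (A := Set.univ) fun _ _ _ => rfl,
    probReal_univ, one_mul, Nat.sub_zero, trialWeight_true]

theorem measureReal_waitingTime_eq_add (hp0 : 0 ≤ p) (hp1 : p ≤ 1) (hμ : IsBernoulli p μ)
    (m : ℕ) :
    μ.real {ω | waitingTime k ω = m + k + 1} = p ^ k * (1 - p) * μ.real (noRunBy k m) := by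
  rw [setOf_waitingTime_eq_add, measureReal_inter_block hp0 hp1 hμ (by omega)
      (dependsOn_inter ((dependsOn_noRunBy k m).mono (Set.Icc_subset_Icc_right (by omega)))
        (dependsOn_block m (m + 1) false)),
    measureReal_inter_block hp0 hp1 hμ (by omega) (dependsOn_noRunBy k m),
    show m + k + 1 - (m + 1) = k by omega, Nat.add_sub_cancel_left, trialWeight_true,
    trialWeight_false, pow_one]
  ring

theorem measureReal_noRunBy_eq_add [IsFiniteMeasure μ] (m : ℕ) :
    μ.real (noRunBy k m)
      = μ.real (noRunBy k (m + 1)) + μ.real {ω | waitingTime k ω = m + 1} := by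
  rw [setOf_waitingTime_eq_succ, measureReal_sdiff (noRunBy_anti m.le_succ)
    (measurableSet_of_dependsOn (dependsOn_noRunBy k (m + 1)))]
  ring

theorem one_sub_C_mul_X_mul_one_sub_sum {R : Type*} [CommRing R] (a : R) (k : ℕ) :
    (1 - C a * X) * (1 - ∑ i ∈ Icc 1 k, C ((1 - a) * a ^ (i - 1)) * X ^ i)
      = 1 - X + C (a ^ k * (1 - a)) * X ^ (k + 1) := by
  induction k with
  | zero =>
    simp only [Icc_eq_empty_of_lt Nat.zero_lt_one, sum_empty, pow_zero, one_mul, map_sub,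
      map_one]
    ring
  | succ k ih =>
    rw [sum_Icc_succ_top (by omega), Nat.add_sub_cancel]
    simp only [map_mul, map_sub, map_one, map_pow] at ih ⊢
    linear_combination ih

theorem mul_mk_eq_of_recurrence {R : Type*} [CommRing R] (a : R) (hk : 1 ≤ k) (f g : ℕ → R)
    (hf_lt : ∀ n < k, f n = 0) (hf_k : f k = a ^ k)
    (hf_gt : ∀ m, f (m + k + 1) = a ^ k * (1 - a) * g m) (hg_zero : g 0 = 1)
    (hg_succ : ∀ m, g m = g (m + 1) + f (m + 1)) :
    (1 - X + C (a ^ k * (1 - a)) * X ^ (k + 1)) * PowerSeries.mk f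
      = C (a ^ k) * X ^ k - C (a ^ (k + 1)) * X ^ (k + 1) := by
  ext n
  have hX : (1 - X + C (a ^ k * (1 - a)) * X ^ (k + 1)) * PowerSeries.mk f
      = PowerSeries.mk f - X ^ 1 * PowerSeries.mk f
        + C (a ^ k * (1 - a)) * (X ^ (k + 1) * PowerSeries.mk f) := by ring
  rw [hX]
  simp only [map_add, map_sub, coeff_C_mul, coeff_X_pow_mul', coeff_mk, coeff_X_pow]
  obtain hn | rfl | ⟨m, rfl⟩ : n < k ∨ n = k ∨ ∃ m, n = m + k + 1 := by
    rcases lt_trichotomy n k with h | h | h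
    exacts [.inl h, .inr (.inl h), .inr (.inr ⟨n - k - 1, by omega⟩)]
  · simp [hf_lt n hn, hf_lt (n - 1) (by omega), hn.ne, show n ≠ k + 1 by omega,
      show ¬ k + 1 ≤ n by omega]
  · simp [hf_k, hf_lt (n - 1) (by omega), hk]
  · rw [show m + k + 1 - (k + 1) = m by omega, Nat.add_sub_cancel, if_pos (by omega),
      if_pos (by omega), if_neg (by omega), hf_gt]
    rcases m with _ | m
    · rw [if_pos (by omega), zero_add, hf_k, hg_zero, hf_lt 0 hk, pow_succ]
      ring
    · rw [if_neg (by omega), show m + 1 + k = m + k + 1 by omega, hf_gt, hg_succ m]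
      ring

theorem mk_identities_of_recurrence {R : Type*} [CommRing R] [IsDomain R] (a : R)
    (hk : 1 ≤ k) (f g : ℕ → R) (hf_lt : ∀ n < k, f n = 0) (hf_k : f k = a ^ k)
    (hf_gt : ∀ m, f (m + k + 1) = a ^ k * (1 - a) * g m) (hg_zero : g 0 = 1)
    (hg_succ : ∀ m, g m = g (m + 1) + f (m + 1)) :
    (1 - ∑ i ∈ Icc 1 k, C ((1 - a) * a ^ (i - 1)) * X ^ i) * PowerSeries.mk f
        = C (a ^ k) * X ^ k ∧
      (1 - X + C (a ^ k * (1 - a)) * X ^ (k + 1)) * PowerSeries.mk f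
        = C (a ^ k) * X ^ k - C (a ^ (k + 1)) * X ^ (k + 1) := by
  have h2 := mul_mk_eq_of_recurrence a hk f g hf_lt hf_k hf_gt hg_zero hg_succ
  have hunit : (1 - C a * X : R⟦X⟧) ≠ 0 := fun h => by simpa using congrArg constantCoeff h
  refine ⟨mul_left_cancel₀ hunit ?_, h2⟩
  rw [← mul_assoc, one_sub_C_mul_X_mul_one_sub_sum, h2, pow_succ, map_mul]
  ring

end SuccessRun

open SuccessRun

theorem stmt6 (p : ℝ) (hp0 : 0 < p) (hp1 : p < 1) (k : ℕ) (hk : 1 ≤ k)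
    (μ : Measure (ℕ → Bool)) [IsProbabilityMeasure μ]
    (hμ : ∀ (n : ℕ) (b : ℕ → Bool),
      μ {ω | ∀ i, 1 ≤ i → i ≤ n → ω i = b i}
        = ENNReal.ofReal (∏ i ∈ Finset.Icc 1 n, if b i = true then p else 1 - p)) :
    (1 - ∑ i ∈ Finset.Icc 1 k,
          PowerSeries.C ((1 - p) * p ^ (i - 1)) * PowerSeries.X ^ i) *
        PowerSeries.mk (fun v => (μ {ω | waitingTime k ω = v}).toReal)
      = PowerSeries.C (p ^ k) * PowerSeries.X ^ k ∧
    (1 - PowerSeries.X + PowerSeries.C (p ^ k * (1 - p)) * PowerSeries.X ^ (k + 1)) *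
        PowerSeries.mk (fun v => (μ {ω | waitingTime k ω = v}).toReal)
      = PowerSeries.C (p ^ k) * PowerSeries.X ^ k
        - PowerSeries.C (p ^ (k + 1)) * PowerSeries.X ^ (k + 1) := by
  have hBer : IsBernoulli p μ := hμ
  exact mk_identities_of_recurrence p hk (fun v => μ.real {ω | waitingTime k ω = v})
    (fun m => μ.real (noRunBy k m))
    (fun n hn => measureReal_waitingTime_eq_of_lt hk hp0 hp1.le hBer hn)
    (measureReal_waitingTime_eq_self hk hp0.le hp1.le hBer)
    (measureReal_waitingTime_eq_add hp0.le hp1.le hBer)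
    (by rw [noRunBy_zero hk, probReal_univ])
    measureReal_noRunBy_eq_add
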